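/- arXiv:1204.3422 — 7 statements merged into one kernel-verified Lean document; each statement's English description precedes it below -/
import Mathlib

section
/- For each arbitrage rule ω = (i,j,k), the vector f_m = Σ_{1 ≤ p < m} e_{pm} - Σ_{m < p ≤ d} e_{mp} (for each m with 2 ≤ m ≤ d) is a fixed point of B_ω, i.e., B_ω f_m = f_m. -/
open Matrix

/-- Index type for the coordinates of `ℝ^{d(d-1)/2}`: pairs `(i,j)` with `i < j`. -/
abbrev Pr (d : ℕ) := {p : Fin d × Fin d // p.1 < p.2}

/-- The pair `(i,j)` with `i < j` as an element of `Pr d`. -/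
def pr {d : ℕ} {i j : Fin d} (h : i < j) : Pr d := ⟨(i, j), h⟩

/-- `Eb p q = e_p e_q^T`, the matrix with a single `1` in position `(p,q)`. -/
noncomputable def Eb {d : ℕ} (p q : Pr d) : Matrix (Pr d) (Pr d) ℝ :=
  Matrix.single p q 1

/-- The matrix `B_ω` for the arbitrage rule `ω = (i,j,k)`, `i < j`, `k ≠ i,j`. -/
noncomputable def Bmat {d : ℕ} (i j k : Fin d) (hij : i < j) (hki : k ≠ i) (hkj : k ≠ j) :
    Matrix (Pr d) (Pr d) ℝ :=
  if h1 : k < i then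
    -- case k < i < j : B = I - e_{ij}(e_{ij}^T + e_{ki}^T - e_{kj}^T)
    1 - Eb (pr hij) (pr hij) - Eb (pr hij) (pr h1) + Eb (pr hij) (pr (h1.trans hij))
  else if h2 : k < j then
    -- case i < k < j : B = I - e_{ij}(e_{ij}^T - e_{ik}^T - e_{kj}^T)
    1 - Eb (pr hij) (pr hij) + Eb (pr hij) (pr (lt_of_le_of_ne (not_lt.1 h1) (Ne.symm hki)))
      + Eb (pr hij) (pr h2)
  else
    -- case i < j < k : B = I - e_{ij}(e_{ij}^T - e_{ik}^T + e_{jk}^T)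
    1 - Eb (pr hij) (pr hij)
      + Eb (pr hij) (pr (hij.trans (lt_of_le_of_ne (not_lt.1 h2) (Ne.symm hkj))))
      - Eb (pr hij) (pr (lt_of_le_of_ne (not_lt.1 h2) (Ne.symm hkj)))

/-- The vector `f_m = Σ_{p<m} e_{pm} - Σ_{m<p} e_{mp}`, written coordinatewise: its
`(a,b)`-coordinate is `1` if `b = m`, `-1` if `a = m`, and `0` otherwise. -/
def fvec {d : ℕ} (m : Fin d) : Pr d → ℝ :=
  fun q => (if q.1.2 = m then (1 : ℝ) else 0) - (if q.1.1 = m then (1 : ℝ) else 0)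

/-! The coordinate `(a,b)` of `f_m` is `δ_{bm} - δ_{am}`, so it telescopes along any chain
`a < b < c`: `f_m(a,b) + f_m(b,c) = f_m(a,c)`. Each `B_ω` is `I - e_{ij} r_ωᵀ`, and `r_ωᵀ f_m` is
exactly such a telescoping relation on the triangle `{i, j, k}`, hence vanishes. -/

theorem fvec_pr_add_fvec_pr {d : ℕ} (m : Fin d) {a b c : Fin d} (hab : a < b) (hbc : b < c) :
    fvec m (pr hab) + fvec m (pr hbc) = fvec m (pr (hab.trans hbc)) := by
  dsimp only [fvec, pr]
  abel

theorem Eb_mulVec {d : ℕ} (p q : Pr d) (v : Pr d → ℝ) : Eb p q *ᵥ v = Pi.single p (v q) := by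
  rw [Eb, single_mulVec, one_mul]
  rfl

theorem fvec_fixed_general (d : ℕ) (m : Fin d)
    (i j k : Fin d) (hij : i < j) (hki : k ≠ i) (hkj : k ≠ j) :
    (Bmat i j k hij hki hkj).mulVec (fvec m) = fvec m := by
  unfold Bmat
  split_ifs with hk_lt_i hk_lt_j
  · have telescope := fvec_pr_add_fvec_pr m hk_lt_i hij
    simp only [sub_mulVec, add_mulVec, one_mulVec, Eb_mulVec, ← telescope, Pi.single_add]
    abel
  · have telescope :=
      fvec_pr_add_fvec_pr m (lt_of_le_of_ne (not_lt.1 hk_lt_i) (Ne.symm hki)) hk_lt_j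
    simp only [sub_mulVec, add_mulVec, one_mulVec, Eb_mulVec, ← telescope, Pi.single_add]
    abel
  · have telescope :=
      fvec_pr_add_fvec_pr m hij (lt_of_le_of_ne (not_lt.1 hk_lt_j) (Ne.symm hkj))
    simp only [sub_mulVec, add_mulVec, one_mulVec, Eb_mulVec, ← telescope, Pi.single_add]
    abel

theorem fvec_fixed (d : ℕ) (hd : 3 ≤ d) (m : Fin d) (hm : 1 ≤ (m : ℕ))
    (i j k : Fin d) (hij : i < j) (hki : k ≠ i) (hkj : k ≠ j) :
    (Bmat i j k hij hki hkj).mulVec (fvec m) = fvec m :=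
  fvec_fixed_general d m i j k hij hki hkj
end

section
/- A vector x = (x_{ij})_{1 ≤ i < j ≤ d} in ℝ^{d(d-1)/2} is a common fixed point of all matrices B_ω (over all arbitrage rules ω = (i,j,k)) if and only if x_{ij} = -x_{1i} + x_{1j} for all 2 ≤ i < j ≤ d. In particular, the subspace of common fixed points has dimension d - 1. -/
open Matrix

/-- The subspace of common fixed points of all the matrices `B_ω`. -/
def FixSubmodule (d : ℕ) : Submodule ℝ (Pr d → ℝ) where
  carrier := {x | ∀ (i j k : Fin d) (hij : i < j) (hki : k ≠ i) (hkj : k ≠ j),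
      (Bmat i j k hij hki hkj).mulVec x = x}
  add_mem' := by
    intro a b ha hb i j k hij hki hkj
    rw [Matrix.mulVec_add, ha i j k hij hki hkj, hb i j k hij hki hkj]
  zero_mem' := by
    intro i j k hij hki hkj
    rw [Matrix.mulVec_zero]
  smul_mem' := by
    intro c x hx i j k hij hki hkj
    rw [Matrix.mulVec_smul, hx i j k hij hki hkj]

/-!
Each `B_ω` differs from the identity only in the row of `e_{ij}`, so `B_ω x = x` is a single
linear equation; in all three cases it is the cocycle relation `x_{ac} = x_{ab} + x_{bc}` for the
sorted triple `a < b < c` of `{i, j, k}`. Putting `a = 0` shows that the cocycles are exactly the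
coboundaries `x_{ij} = y_j - y_i`, and the coboundary map `ℝ^d → ℝ^N` has the constants as kernel,
so the space of common fixed points has dimension `d - 1`.
-/

lemma mulVec_eq_self_iff_of_row_eq_one {n R : Type*} [Fintype n] [DecidableEq n] [Semiring R]
    {B : Matrix n n R} {p : n} (hB : ∀ r, r ≠ p → B r = (1 : Matrix n n R) r) (x : n → R) :
    B *ᵥ x = x ↔ (B *ᵥ x) p = x p := by
  refine ⟨fun h => congrFun h p, fun hp => funext fun r => ?_⟩
  by_cases hr : r = p
  · exact hr ▸ hp
  · rw [mulVec, hB r hr, ← mulVec, one_mulVec]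

section
variable {d : ℕ}

lemma Eb_apply_of_ne {p q r : Pr d} (hr : r ≠ p) (s : Pr d) : Eb p q r s = 0 := by
  simp [Eb, Ne.symm hr]

lemma Eb_mulVec_apply_self (p q : Pr d) (x : Pr d → ℝ) : (Eb p q *ᵥ x) p = x q := by
  simp [Eb, single_mulVec]

lemma Bmat_row_of_ne {i j k : Fin d} (hij : i < j) (hki : k ≠ i) (hkj : k ≠ j) {r : Pr d}
    (hr : r ≠ pr hij) : Bmat i j k hij hki hkj r = (1 : Matrix (Pr d) (Pr d) ℝ) r := by
  ext s
  unfold Bmat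
  split_ifs <;> simp [Eb_apply_of_ne hr]

lemma Bmat_mulVec_eq_self_iff_apply {i j k : Fin d} (hij : i < j) (hki : k ≠ i) (hkj : k ≠ j)
    (x : Pr d → ℝ) :
    Bmat i j k hij hki hkj *ᵥ x = x ↔ (Bmat i j k hij hki hkj *ᵥ x) (pr hij) = x (pr hij) :=
  mulVec_eq_self_iff_of_row_eq_one (fun _ => Bmat_row_of_ne hij hki hkj) x

section
variable {i j k : Fin d} (hij : i < j) (hki : k ≠ i) (hkj : k ≠ j) (x : Pr d → ℝ)

lemma Bmat_mulVec_eq_self_iff_of_lt_left (hk : k < i) :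
    Bmat i j k hij hki hkj *ᵥ x = x ↔ x (pr (hk.trans hij)) = x (pr hk) + x (pr hij) := by
  rw [Bmat_mulVec_eq_self_iff_apply, Bmat, dif_pos hk]
  simp only [add_mulVec, sub_mulVec, Pi.add_apply, Pi.sub_apply, one_mulVec, Eb_mulVec_apply_self]
  constructor <;> intro <;> linarith

lemma Bmat_mulVec_eq_self_iff_of_lt_of_lt (hik : i < k) (hkj' : k < j) :
    Bmat i j k hij hki hkj *ᵥ x = x ↔ x (pr hij) = x (pr hik) + x (pr hkj') := by
  rw [Bmat_mulVec_eq_self_iff_apply, Bmat, dif_neg hik.not_gt, dif_pos hkj']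
  simp only [add_mulVec, sub_mulVec, Pi.add_apply, Pi.sub_apply, one_mulVec, Eb_mulVec_apply_self]
  constructor <;> intro <;> linarith

lemma Bmat_mulVec_eq_self_iff_of_lt_right (hk : j < k) :
    Bmat i j k hij hki hkj *ᵥ x = x ↔ x (pr (hij.trans hk)) = x (pr hij) + x (pr hk) := by
  rw [Bmat_mulVec_eq_self_iff_apply, Bmat, dif_neg (hij.trans hk).not_gt, dif_neg hk.not_gt]
  simp only [add_mulVec, sub_mulVec, Pi.add_apply, Pi.sub_apply, one_mulVec, Eb_mulVec_apply_self]
  constructor <;> intro <;> linarith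

end

def IsCocycle (x : Pr d → ℝ) : Prop :=
  ∀ (a b c : Fin d) (hab : a < b) (hbc : b < c), x (pr (hab.trans hbc)) = x (pr hab) + x (pr hbc)

lemma forall_Bmat_mulVec_eq_self_iff (x : Pr d → ℝ) :
    (∀ (i j k : Fin d) (hij : i < j) (hki : k ≠ i) (hkj : k ≠ j),
      Bmat i j k hij hki hkj *ᵥ x = x) ↔ IsCocycle x := by
  constructor
  · intro h a b c hab hbc
    exact (Bmat_mulVec_eq_self_iff_of_lt_left hbc _ _ x hab).1
      (h b c a hbc hab.ne (hab.trans hbc).ne)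
  · intro h i j k hij hki hkj
    rcases lt_or_gt_of_ne hki with hk | hik
    · exact (Bmat_mulVec_eq_self_iff_of_lt_left hij hki hkj x hk).2 (h k i j hk hij)
    rcases lt_or_gt_of_ne hkj with hkj' | hjk
    · exact (Bmat_mulVec_eq_self_iff_of_lt_of_lt hij hki hkj x hik hkj').2 (h i k j hik hkj')
    · exact (Bmat_mulVec_eq_self_iff_of_lt_right hij hki hkj x hjk).2 (h i j k hij hjk)

lemma mem_FixSubmodule_iff_isCocycle (x : Pr d → ℝ) : x ∈ FixSubmodule d ↔ IsCocycle x :=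
  forall_Bmat_mulVec_eq_self_iff x

lemma isCocycle_iff_forall_zero_lt [NeZero d] (x : Pr d → ℝ) :
    IsCocycle x ↔ ∀ (i j : Fin d) (h0i : (0 : Fin d) < i) (hij : i < j),
      x (pr hij) = -x (pr h0i) + x (pr (h0i.trans hij)) := by
  constructor
  · intro h i j h0i hij
    linarith [h 0 i j h0i hij]
  · intro h a b c hab hbc
    rcases (Fin.zero_le a).eq_or_lt with rfl | h0a
    · linarith [h b c hab hbc]
    · linarith [h a b h0a hab, h a c h0a (hab.trans hbc), h b c (h0a.trans hab) hbc]

variable (d) in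
def coboundary : (Fin d → ℝ) →ₗ[ℝ] (Pr d → ℝ) where
  toFun y p := y p.1.2 - y p.1.1
  map_add' _ _ := by ext; simp only [Pi.add_apply]; ring
  map_smul' _ _ := by ext; simp only [Pi.smul_apply, smul_eq_mul, RingHom.id_apply]; ring

lemma coboundary_apply (y : Fin d → ℝ) {i j : Fin d} (hij : i < j) :
    coboundary d y (pr hij) = y j - y i := rfl

lemma isCocycle_coboundary (y : Fin d → ℝ) : IsCocycle (coboundary d y) := by
  intro a b c hab hbc
  simp only [coboundary_apply]
  ring

lemma exists_coboundary_eq_of_isCocycle [NeZero d] {x : Pr d → ℝ} (hx : IsCocycle x) :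
    ∃ y, coboundary d y = x := by
  refine ⟨fun j => if h : 0 < j then x (pr h) else 0, ?_⟩
  ext ⟨⟨i, j⟩, hij⟩
  change (if h : 0 < j then x (pr h) else 0) - (if h : 0 < i then x (pr h) else 0) = x (pr hij)
  rcases (Fin.zero_le i).eq_or_lt with rfl | h0i
  · simp [hij]
  · rw [dif_pos h0i, dif_pos (h0i.trans hij)]
    linarith [hx 0 i j h0i hij]

lemma range_coboundary [NeZero d] : LinearMap.range (coboundary d) = FixSubmodule d := by
  ext x
  rw [LinearMap.mem_range, mem_FixSubmodule_iff_isCocycle]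
  exact ⟨by rintro ⟨y, rfl⟩; exact isCocycle_coboundary y, exists_coboundary_eq_of_isCocycle⟩

lemma ker_coboundary [NeZero d] : LinearMap.ker (coboundary d) = ℝ ∙ 1 := by
  ext y
  rw [LinearMap.mem_ker, Submodule.mem_span_singleton]
  constructor
  · intro hy
    refine ⟨y 0, funext fun j => ?_⟩
    rcases (Fin.zero_le j).eq_or_lt with rfl | h0j
    · simp
    · have := congrFun hy (pr h0j)
      rw [coboundary_apply, Pi.zero_apply] at this
      simp only [Pi.smul_apply, Pi.one_apply, smul_eq_mul, mul_one]
      linarith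
  · rintro ⟨a, rfl⟩
    ext p
    simp [coboundary]

lemma finrank_FixSubmodule [NeZero d] : Module.finrank ℝ (FixSubmodule d) = d - 1 := by
  have := (coboundary d).finrank_range_add_finrank_ker
  rw [range_coboundary, ker_coboundary, finrank_span_singleton one_ne_zero,
    Module.finrank_fin_fun] at this
  omega

end

theorem common_fixed_points_general (d : ℕ) [NeZero d] :
    (∀ x : Pr d → ℝ,
      (∀ (i j k : Fin d) (hij : i < j) (hki : k ≠ i) (hkj : k ≠ j),
          (Bmat i j k hij hki hkj).mulVec x = x)
        ↔ ∀ (i j : Fin d) (h0i : (0 : Fin d) < i) (hij : i < j),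
            x (pr hij) = -x (pr h0i) + x (pr (h0i.trans hij)))
    ∧ Module.finrank ℝ (FixSubmodule d) = d - 1 :=
  ⟨fun x => (forall_Bmat_mulVec_eq_self_iff x).trans (isCocycle_iff_forall_zero_lt x),
    finrank_FixSubmodule⟩

theorem common_fixed_points (d : ℕ) [NeZero d] (hd : 3 ≤ d) :
    (∀ x : Pr d → ℝ,
      (∀ (i j k : Fin d) (hij : i < j) (hki : k ≠ i) (hkj : k ≠ j),
          (Bmat i j k hij hki hkj).mulVec x = x)
        ↔ ∀ (i j : Fin d) (h0i : (0 : Fin d) < i) (hij : i < j),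
            x (pr hij) = -x (pr h0i) + x (pr (h0i.trans hij)))
    ∧ Module.finrank ℝ (FixSubmodule d) = d - 1 :=
  common_fixed_points_general d
end

section
/- For every arbitrage rule ω = (1,i,j) with 1 < i < j (case k = 1), the conjugated matrix Q^{-1} B_ω Q equals I - e_{ij} e_{ij}^T, where B_ω = I - e_{ij}(e_{ij}^T + e_{1i}^T - e_{1j}^T) and Q = I + Σ_{2 ≤ m < n ≤ d} e_{mn}(e_{1n}^T - e_{1m}^T). -/
open Matrix

/-- `Q = I + Σ_{2 ≤ i < j ≤ d} e_{ij}(e_{1j}^T - e_{1i}^T)`. -/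
noncomputable def Qmat (d : ℕ) [NeZero d] : Matrix (Pr d) (Pr d) ℝ :=
  1 + ∑ p : Pr d,
    if h : (0 : Fin d) < p.1.1 then Eb p (pr (h.trans p.2)) - Eb p (pr h) else 0

/-- `Q⁻¹ = I - Σ_{2 ≤ i < j ≤ d} e_{ij}(e_{1j}^T - e_{1i}^T)`. -/
noncomputable def Qinv (d : ℕ) [NeZero d] : Matrix (Pr d) (Pr d) ℝ :=
  1 - ∑ p : Pr d,
    if h : (0 : Fin d) < p.1.1 then Eb p (pr (h.trans p.2)) - Eb p (pr h) else 0

/-!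
Write `Q = 1 + S` and `Q⁻¹ = 1 - S` with `S = Qnil d`. Every nonzero row of `S` is indexed by a pair
`(m, n)` with `m ≠ 1`, while every nonzero column of `S` is indexed by a pair `(1, n)`; hence `S² = 0` and `S E = 0` for
`E = e_{ij} e_{ij}ᵀ`. Since `E S = e_{ij} (e_{1j} - e_{1i})ᵀ`, the rule matrix factors as
`B = 1 - E (1 - S)`, and then `(1 - S) B (1 + S) = (1 - S)(1 + S) - E (1 - S)(1 + S) = 1 - E`.
The paper's index `1` is `0 : Fin d` here.
-/

theorem one_sub_mul_one_sub_mul_mul_one_add {R : Type*} [Ring R] {S E : R}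
    (hSS : S * S = 0) (hSE : S * E = 0) :
    (1 - S) * (1 - E * (1 - S)) * (1 + S) = 1 - E := by
  have hQ : (1 - S) * (1 + S) = 1 := by
    rw [sub_mul, one_mul, mul_add, mul_one, hSS, add_zero, add_sub_cancel_right]
  have hE : (1 - S) * E = E := by rw [sub_mul, one_mul, hSE, sub_zero]
  calc (1 - S) * (1 - E * (1 - S)) * (1 + S)
      = (1 - S) * (1 + S) - (1 - S) * E * ((1 - S) * (1 + S)) := by noncomm_ring
    _ = 1 - E := by rw [hQ, hE, mul_one]

section Eb

variable {d : ℕ}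

theorem Eb_mul_Eb_of_ne {p q r s : Pr d} (h : q ≠ r) : Eb p q * Eb r s = 0 :=
  single_mul_single_of_ne 1 p q r h 1

theorem Eb_mul_Eb (p q s : Pr d) : Eb p q * Eb q s = Eb p s := by
  simp [Eb]

end Eb

noncomputable def Qnil (d : ℕ) [NeZero d] : Matrix (Pr d) (Pr d) ℝ :=
  ∑ p : Pr d, if h : (0 : Fin d) < p.1.1 then Eb p (pr (h.trans p.2)) - Eb p (pr h) else 0

section Qnil

variable {d : ℕ} [NeZero d]

theorem Qmat_eq_one_add_Qnil : Qmat d = 1 + Qnil d := rfl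

theorem Qinv_eq_one_sub_Qnil : Qinv d = 1 - Qnil d := rfl

theorem Qnil_mul_Eb_of_fst_ne_zero {p q : Pr d} (hp : p.1.1 ≠ 0) : Qnil d * Eb p q = 0 := by
  refine (Finset.sum_mul _ _ _).trans (Finset.sum_eq_zero fun r _ => ?_)
  split_ifs with h
  · have hne {x : Fin d} (hx : 0 < x) : pr hx ≠ p := fun he => hp (congrArg (·.1.1) he).symm
    rw [sub_mul, Eb_mul_Eb_of_ne (hne _), Eb_mul_Eb_of_ne (hne _), sub_zero]
  · exact zero_mul _

theorem Eb_mul_Qnil_of_fst_eq_zero {p q : Pr d} (hq : q.1.1 = 0) : Eb p q * Qnil d = 0 := by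
  refine (Finset.mul_sum _ _ _).trans (Finset.sum_eq_zero fun r _ => ?_)
  split_ifs with h
  · have hne : q ≠ r := fun he => h.ne' (he ▸ hq)
    rw [mul_sub, Eb_mul_Eb_of_ne hne, Eb_mul_Eb_of_ne hne, sub_zero]
  · exact mul_zero _

theorem Qnil_mul_Qnil : Qnil d * Qnil d = 0 := by
  refine (Finset.sum_mul _ _ _).trans (Finset.sum_eq_zero fun r _ => ?_)
  split_ifs
  · rw [sub_mul, Eb_mul_Qnil_of_fst_eq_zero rfl, Eb_mul_Qnil_of_fst_eq_zero rfl, sub_zero]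
  · exact zero_mul _

theorem Eb_self_mul_Qnil {i j : Fin d} (h0i : 0 < i) (hij : i < j) :
    Eb (pr hij) (pr hij) * Qnil d = Eb (pr hij) (pr (h0i.trans hij)) - Eb (pr hij) (pr h0i) := by
  rw [Qnil, Finset.mul_sum, Finset.sum_eq_single_of_mem (pr hij) (Finset.mem_univ _)]
  · rw [dif_pos (show (0 : Fin d) < (pr hij).1.1 from h0i), mul_sub, Eb_mul_Eb, Eb_mul_Eb]
    rfl
  · intro q _ hq
    split_ifs
    · rw [mul_sub, Eb_mul_Eb_of_ne hq.symm, Eb_mul_Eb_of_ne hq.symm, sub_zero]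
    · exact mul_zero _

theorem Bmat_zero_eq {i j : Fin d} (h0i : 0 < i) (hij : i < j) :
    Bmat i j 0 hij h0i.ne (h0i.trans hij).ne
      = 1 - Eb (pr hij) (pr hij) * (1 - Qnil d) := by
  rw [Bmat, dif_pos h0i, mul_sub, mul_one, Eb_self_mul_Qnil h0i hij]
  abel

end Qnil

theorem conj_case_k_eq_one_general (d : ℕ) [NeZero d]
    (i j : Fin d) (h0i : (0 : Fin d) < i) (hij : i < j) :
    Qinv d * Bmat i j 0 hij h0i.ne (h0i.trans hij).ne * Qmat d
      = 1 - Eb (pr hij) (pr hij) := by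
  rw [Qinv_eq_one_sub_Qnil, Bmat_zero_eq h0i hij, Qmat_eq_one_add_Qnil]
  exact one_sub_mul_one_sub_mul_mul_one_add Qnil_mul_Qnil
    (Qnil_mul_Eb_of_fst_ne_zero h0i.ne')

theorem conj_case_k_eq_one (d : ℕ) [NeZero d] (hd : 3 ≤ d)
    (i j : Fin d) (h0i : (0 : Fin d) < i) (hij : i < j) :
    Qinv d * Bmat i j 0 hij h0i.ne (h0i.trans hij).ne * Qmat d
      = 1 - Eb (pr hij) (pr hij) :=
  conj_case_k_eq_one_general d i j h0i hij
end

section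
/- In the case d = 4, each of the twelve matrices G_ω maps the set {±s₁,...,±s₆} ∪ {0} into itself (up to a zero image); consequently, any finite product of matrices from {G_ω} applied to s₁ lies in {±s₁,...,±s₆, 0}, so all such orbits are bounded. -/
open Matrix

noncomputable def G123 : Matrix (Fin 3) (Fin 3) ℝ := !![0,0,0; -1,1,0; 0,0,1]
noncomputable def G124 : Matrix (Fin 3) (Fin 3) ℝ := !![1,-1,0; 0,0,0; 0,0,1]
noncomputable def G132 : Matrix (Fin 3) (Fin 3) ℝ := !![0,0,0; 0,1,0; 1,0,1]
noncomputable def G134 : Matrix (Fin 3) (Fin 3) ℝ := !![1,0,1; 0,1,0; 0,0,0]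
noncomputable def G142 : Matrix (Fin 3) (Fin 3) ℝ := !![1,0,0; 0,0,0; 0,-1,1]
noncomputable def G143 : Matrix (Fin 3) (Fin 3) ℝ := !![1,0,0; 0,1,-1; 0,0,0]
noncomputable def G231 : Matrix (Fin 3) (Fin 3) ℝ := !![0,0,0; 0,1,0; 0,0,1]
noncomputable def G234 : Matrix (Fin 3) (Fin 3) ℝ := !![0,1,-1; 0,1,0; 0,0,1]
noncomputable def G241 : Matrix (Fin 3) (Fin 3) ℝ := !![1,0,0; 0,0,0; 0,0,1]
noncomputable def G243 : Matrix (Fin 3) (Fin 3) ℝ := !![1,0,0; 1,0,1; 0,0,1]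
noncomputable def G341 : Matrix (Fin 3) (Fin 3) ℝ := !![1,0,0; 0,1,0; 0,0,0]
noncomputable def G342 : Matrix (Fin 3) (Fin 3) ℝ := !![1,0,0; 0,1,0; -1,1,0]

/-- The full family of the twelve matrices `G_ω` for `d = 4`. -/
noncomputable def Gset : Set (Matrix (Fin 3) (Fin 3) ℝ) :=
  {G123, G124, G132, G134, G142, G143, G231, G234, G241, G243, G341, G342}

noncomputable def s1 : Fin 3 → ℝ := ![1, 1, 0]
noncomputable def s2 : Fin 3 → ℝ := ![1, 0, -1]
noncomputable def s3 : Fin 3 → ℝ := ![0, 1, 1]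
noncomputable def s4 : Fin 3 → ℝ := ![1, 0, 0]
noncomputable def s5 : Fin 3 → ℝ := ![0, 1, 0]
noncomputable def s6 : Fin 3 → ℝ := ![0, 0, 1]

/-- The finite set `{±s₁,…,±s₆} ∪ {0}`. -/
noncomputable def Vset : Set (Fin 3 → ℝ) :=
  {s1, -s1, s2, -s2, s3, -s3, s4, -s4, s5, -s5, s6, -s6, 0}

section Aux

set_option maxHeartbeats 2000000

lemma key1 : ∀ v ∈ Vset, G123.mulVec v ∈ Vset := by
  intro v hv
  simp only [Vset, Set.mem_insert_iff, Set.mem_singleton_iff] at hv ⊢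
  rcases hv with rfl|rfl|rfl|rfl|rfl|rfl|rfl|rfl|rfl|rfl|rfl|rfl|rfl <;>
    norm_num [G123, s1, s2, s3, s4, s5, s6, Matrix.mulVec, dotProduct,
      Fin.sum_univ_three, funext_iff, Fin.forall_fin_succ]

lemma key2 : ∀ v ∈ Vset, G124.mulVec v ∈ Vset := by
  intro v hv
  simp only [Vset, Set.mem_insert_iff, Set.mem_singleton_iff] at hv ⊢
  rcases hv with rfl|rfl|rfl|rfl|rfl|rfl|rfl|rfl|rfl|rfl|rfl|rfl|rfl <;>
    norm_num [G124, s1, s2, s3, s4, s5, s6, Matrix.mulVec, dotProduct,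
      Fin.sum_univ_three, funext_iff, Fin.forall_fin_succ]

lemma key3 : ∀ v ∈ Vset, G132.mulVec v ∈ Vset := by
  intro v hv
  simp only [Vset, Set.mem_insert_iff, Set.mem_singleton_iff] at hv ⊢
  rcases hv with rfl|rfl|rfl|rfl|rfl|rfl|rfl|rfl|rfl|rfl|rfl|rfl|rfl <;>
    norm_num [G132, s1, s2, s3, s4, s5, s6, Matrix.mulVec, dotProduct,
      Fin.sum_univ_three, funext_iff, Fin.forall_fin_succ]

lemma key4 : ∀ v ∈ Vset, G134.mulVec v ∈ Vset := by
  intro v hv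
  simp only [Vset, Set.mem_insert_iff, Set.mem_singleton_iff] at hv ⊢
  rcases hv with rfl|rfl|rfl|rfl|rfl|rfl|rfl|rfl|rfl|rfl|rfl|rfl|rfl <;>
    norm_num [G134, s1, s2, s3, s4, s5, s6, Matrix.mulVec, dotProduct,
      Fin.sum_univ_three, funext_iff, Fin.forall_fin_succ]

lemma key5 : ∀ v ∈ Vset, G142.mulVec v ∈ Vset := by
  intro v hv
  simp only [Vset, Set.mem_insert_iff, Set.mem_singleton_iff] at hv ⊢
  rcases hv with rfl|rfl|rfl|rfl|rfl|rfl|rfl|rfl|rfl|rfl|rfl|rfl|rfl <;>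
    norm_num [G142, s1, s2, s3, s4, s5, s6, Matrix.mulVec, dotProduct,
      Fin.sum_univ_three, funext_iff, Fin.forall_fin_succ]

lemma key6 : ∀ v ∈ Vset, G143.mulVec v ∈ Vset := by
  intro v hv
  simp only [Vset, Set.mem_insert_iff, Set.mem_singleton_iff] at hv ⊢
  rcases hv with rfl|rfl|rfl|rfl|rfl|rfl|rfl|rfl|rfl|rfl|rfl|rfl|rfl <;>
    norm_num [G143, s1, s2, s3, s4, s5, s6, Matrix.mulVec, dotProduct,
      Fin.sum_univ_three, funext_iff, Fin.forall_fin_succ]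

lemma key7 : ∀ v ∈ Vset, G231.mulVec v ∈ Vset := by
  intro v hv
  simp only [Vset, Set.mem_insert_iff, Set.mem_singleton_iff] at hv ⊢
  rcases hv with rfl|rfl|rfl|rfl|rfl|rfl|rfl|rfl|rfl|rfl|rfl|rfl|rfl <;>
    norm_num [G231, s1, s2, s3, s4, s5, s6, Matrix.mulVec, dotProduct,
      Fin.sum_univ_three, funext_iff, Fin.forall_fin_succ]

lemma key8 : ∀ v ∈ Vset, G234.mulVec v ∈ Vset := by
  intro v hv
  simp only [Vset, Set.mem_insert_iff, Set.mem_singleton_iff] at hv ⊢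
  rcases hv with rfl|rfl|rfl|rfl|rfl|rfl|rfl|rfl|rfl|rfl|rfl|rfl|rfl <;>
    norm_num [G234, s1, s2, s3, s4, s5, s6, Matrix.mulVec, dotProduct,
      Fin.sum_univ_three, funext_iff, Fin.forall_fin_succ]

lemma key9 : ∀ v ∈ Vset, G241.mulVec v ∈ Vset := by
  intro v hv
  simp only [Vset, Set.mem_insert_iff, Set.mem_singleton_iff] at hv ⊢
  rcases hv with rfl|rfl|rfl|rfl|rfl|rfl|rfl|rfl|rfl|rfl|rfl|rfl|rfl <;>
    norm_num [G241, s1, s2, s3, s4, s5, s6, Matrix.mulVec, dotProduct,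
      Fin.sum_univ_three, funext_iff, Fin.forall_fin_succ]

lemma key10 : ∀ v ∈ Vset, G243.mulVec v ∈ Vset := by
  intro v hv
  simp only [Vset, Set.mem_insert_iff, Set.mem_singleton_iff] at hv ⊢
  rcases hv with rfl|rfl|rfl|rfl|rfl|rfl|rfl|rfl|rfl|rfl|rfl|rfl|rfl <;>
    norm_num [G243, s1, s2, s3, s4, s5, s6, Matrix.mulVec, dotProduct,
      Fin.sum_univ_three, funext_iff, Fin.forall_fin_succ]

lemma key11 : ∀ v ∈ Vset, G341.mulVec v ∈ Vset := by
  intro v hv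
  simp only [Vset, Set.mem_insert_iff, Set.mem_singleton_iff] at hv ⊢
  rcases hv with rfl|rfl|rfl|rfl|rfl|rfl|rfl|rfl|rfl|rfl|rfl|rfl|rfl <;>
    norm_num [G341, s1, s2, s3, s4, s5, s6, Matrix.mulVec, dotProduct,
      Fin.sum_univ_three, funext_iff, Fin.forall_fin_succ]

lemma key12 : ∀ v ∈ Vset, G342.mulVec v ∈ Vset := by
  intro v hv
  simp only [Vset, Set.mem_insert_iff, Set.mem_singleton_iff] at hv ⊢
  rcases hv with rfl|rfl|rfl|rfl|rfl|rfl|rfl|rfl|rfl|rfl|rfl|rfl|rfl <;>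
    norm_num [G342, s1, s2, s3, s4, s5, s6, Matrix.mulVec, dotProduct,
      Fin.sum_univ_three, funext_iff, Fin.forall_fin_succ]

lemma keyAll : ∀ G ∈ Gset, ∀ v ∈ Vset, G.mulVec v ∈ Vset := by
  intro G hG
  simp only [Gset, Set.mem_insert_iff, Set.mem_singleton_iff] at hG
  rcases hG with rfl|rfl|rfl|rfl|rfl|rfl|rfl|rfl|rfl|rfl|rfl|rfl
  exacts [key1, key2, key3, key4, key5, key6, key7, key8, key9, key10, key11, key12]

lemma s1_mem : s1 ∈ Vset := by
  simp [Vset]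

lemma norm_le_one : ∀ v ∈ Vset, ‖v‖ ≤ 1 := by
  intro v hv
  simp only [Vset, Set.mem_insert_iff, Set.mem_singleton_iff] at hv
  rcases hv with rfl|rfl|rfl|rfl|rfl|rfl|rfl|rfl|rfl|rfl|rfl|rfl|rfl <;>
    rw [pi_norm_le_iff_of_nonneg (by norm_num : (0:ℝ) ≤ 1)] <;>
    intro i <;> fin_cases i <;>
    norm_num [s1, s2, s3, s4, s5, s6, Real.norm_eq_abs]

lemma prodMemAux : ∀ l : List (Matrix (Fin 3) (Fin 3) ℝ), (∀ G ∈ l, G ∈ Gset) →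
    l.prod.mulVec s1 ∈ Vset := by
  intro l
  induction l with
  | nil => intro _; simpa [Matrix.mulVec_one] using s1_mem
  | cons G t ih =>
    intro h
    rw [List.prod_cons, ← Matrix.mulVec_mulVec]
    exact keyAll G (h G (by simp)) _ (ih fun M hM => h M (by simp [hM]))

end Aux

theorem Gset_orbit_finite_and_bounded :
    (∀ G ∈ Gset, ∀ v ∈ Vset, G.mulVec v ∈ Vset)
    ∧ (∀ l : List (Matrix (Fin 3) (Fin 3) ℝ), (∀ G ∈ l, G ∈ Gset) →
        l.prod.mulVec s1 ∈ Vset)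
    ∧ ∃ C : ℝ, ∀ l : List (Matrix (Fin 3) (Fin 3) ℝ), (∀ G ∈ l, G ∈ Gset) →
        ‖l.prod.mulVec s1‖ ≤ C := by
  refine ⟨keyAll, prodMemAux, 1, fun l hl => norm_le_one _ (prodMemAux l hl)⟩
end

section
/- In the case d = 4, with the 16-term sequence of arbitrage rules ω(1),...,ω(16) given by (1,4,2),(1,2,3),(3,4,1),(1,4,2),(1,3,4),(2,4,3),(2,3,1),(3,4,2),(2,4,1),(1,3,4),(3,4,2),(1,4,3),(2,3,4),(1,3,2),(1,2,4),(1,4,3), the product G_{ω(16)} ⋯ G_{ω(2)} G_{ω(1)} applied to s₁ = (1,1,0)^T equals -s₁; hence applying the 32-step doubled sequence returns s₁ and the orbit is 32-periodic and non-constant. -/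
open Matrix

/-- The matrices `G_{ω(16)}, …, G_{ω(1)}` (in product order) for the sequence
`ω(1),…,ω(16) = (142),(123),(341),(142),(134),(243),(231),(342),(241),(134),(342),(143),(234),(132),(124),(143)`. -/
noncomputable def L16 : List (Matrix (Fin 3) (Fin 3) ℝ) :=
  [G143, G124, G132, G234, G143, G342, G134, G241, G342, G231, G243, G134, G142, G341, G123, G142]

theorem period32_example :
    L16.prod.mulVec s1 = -s1
    ∧ (L16 ++ L16).prod.mulVec s1 = s1
    ∧ -s1 ≠ s1 := by
  have key : L16.prod.mulVec s1 = -s1 := by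
    simp only [L16, G123, G124, G132, G134, G142, G143, G231, G234, G241, G243, G341, G342,
      List.prod_cons, List.prod_nil, mul_one]
    funext i
    fin_cases i <;>
      simp [Matrix.mulVec, dotProduct, Fin.sum_univ_succ, s1, Matrix.mul_apply] <;> norm_num
  refine ⟨key, ?_, ?_⟩
  · rw [List.prod_append, ← Matrix.mulVec_mulVec, key]
    have : L16.prod.mulVec (-s1) = -(L16.prod.mulVec s1) := by
      simp [Matrix.mulVec_neg]
    rw [this, key, neg_neg]
  · intro h
    have := congrFun h 0
    simp [s1] at this
    linarith
end

section
/- In the case d = 4, with the 12-term sequence of arbitrage rules (1,4,3),(3,4,1),(3,4,2),(1,4,2),(1,2,4),(2,3,1),(1,3,2),(2,4,3),(1,3,4),(2,4,1),(1,2,3),(2,3,4), the product G_{ω(12)} ⋯ G_{ω(1)} applied to s₁ = (1,1,0)^T equals s₁, so the orbit of s₁ under the periodically extended sequence is 12-periodic. -/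
open Matrix

/-- The matrices `G_{ω(12)}, …, G_{ω(1)}` (in product order) for the sequence
`ω(1),…,ω(12) = (143),(341),(342),(142),(124),(231),(132),(243),(134),(241),(123),(234)`. -/
noncomputable def L12 : List (Matrix (Fin 3) (Fin 3) ℝ) :=
  [G234, G123, G241, G134, G243, G132, G231, G124, G142, G342, G341, G143]

theorem period12_example :
    L12.prod.mulVec s1 = s1
    ∧ ∀ n : ℕ, (L12.prod ^ n).mulVec s1 = s1 := by
  have h : L12.prod.mulVec s1 = s1 := by
    simp only [L12, G123, G124, G132, G134, G142, G143, G231, G234, G241, G243, G341, G342,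
      List.prod_cons, List.prod_nil, mul_one, s1]
    ext i
    fin_cases i <;>
      simp [Matrix.mulVec, dotProduct, Fin.sum_univ_succ, Matrix.mul_apply]
  refine ⟨h, fun n => ?_⟩
  induction n with
  | zero => simp [Matrix.one_mulVec]
  | succ n ih => rw [pow_succ, ← Matrix.mulVec_mulVec, h, ih]
end

section
/- For d = 4, the common fixed-point subspace of the twelve matrices B_ω is exactly the set of vectors (x₁₂, x₁₃, x₁₄, x₂₃, x₂₄, x₃₄) satisfying x₁₃ = x₁₂ + x₂₃, x₁₄ = x₁₃ + x₃₄, and x₂₄ = x₂₃ + x₃₄; in particular these three equations imply x₁₄ = x₁₂ + x₂₄. -/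
open Matrix

-- Coordinates of ℝ⁶ are ordered (x₁₂, x₁₃, x₁₄, x₂₃, x₂₄, x₃₄).
noncomputable def B123 : Matrix (Fin 6) (Fin 6) ℝ :=
  !![0,1,0,-1,0,0; 0,1,0,0,0,0; 0,0,1,0,0,0; 0,0,0,1,0,0; 0,0,0,0,1,0; 0,0,0,0,0,1]
noncomputable def B124 : Matrix (Fin 6) (Fin 6) ℝ :=
  !![0,0,1,0,-1,0; 0,1,0,0,0,0; 0,0,1,0,0,0; 0,0,0,1,0,0; 0,0,0,0,1,0; 0,0,0,0,0,1]
noncomputable def B132 : Matrix (Fin 6) (Fin 6) ℝ :=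
  !![1,0,0,0,0,0; 1,0,0,1,0,0; 0,0,1,0,0,0; 0,0,0,1,0,0; 0,0,0,0,1,0; 0,0,0,0,0,1]
noncomputable def B134 : Matrix (Fin 6) (Fin 6) ℝ :=
  !![1,0,0,0,0,0; 0,0,1,0,0,-1; 0,0,1,0,0,0; 0,0,0,1,0,0; 0,0,0,0,1,0; 0,0,0,0,0,1]
noncomputable def B142 : Matrix (Fin 6) (Fin 6) ℝ :=
  !![1,0,0,0,0,0; 0,1,0,0,0,0; 1,0,0,0,1,0; 0,0,0,1,0,0; 0,0,0,0,1,0; 0,0,0,0,0,1]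
noncomputable def B143 : Matrix (Fin 6) (Fin 6) ℝ :=
  !![1,0,0,0,0,0; 0,1,0,0,0,0; 0,1,0,0,0,1; 0,0,0,1,0,0; 0,0,0,0,1,0; 0,0,0,0,0,1]
noncomputable def B231 : Matrix (Fin 6) (Fin 6) ℝ :=
  !![1,0,0,0,0,0; 0,1,0,0,0,0; 0,0,1,0,0,0; -1,1,0,0,0,0; 0,0,0,0,1,0; 0,0,0,0,0,1]
noncomputable def B234 : Matrix (Fin 6) (Fin 6) ℝ :=
  !![1,0,0,0,0,0; 0,1,0,0,0,0; 0,0,1,0,0,0; 0,0,0,0,1,-1; 0,0,0,0,1,0; 0,0,0,0,0,1]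
noncomputable def B241 : Matrix (Fin 6) (Fin 6) ℝ :=
  !![1,0,0,0,0,0; 0,1,0,0,0,0; 0,0,1,0,0,0; 0,0,0,1,0,0; -1,0,1,0,0,0; 0,0,0,0,0,1]
noncomputable def B243 : Matrix (Fin 6) (Fin 6) ℝ :=
  !![1,0,0,0,0,0; 0,1,0,0,0,0; 0,0,1,0,0,0; 0,0,0,1,0,0; 0,0,0,1,0,1; 0,0,0,0,0,1]
noncomputable def B341 : Matrix (Fin 6) (Fin 6) ℝ :=
  !![1,0,0,0,0,0; 0,1,0,0,0,0; 0,0,1,0,0,0; 0,0,0,1,0,0; 0,0,0,0,1,0; 0,-1,1,0,0,0]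
noncomputable def B342 : Matrix (Fin 6) (Fin 6) ℝ :=
  !![1,0,0,0,0,0; 0,1,0,0,0,0; 0,0,1,0,0,0; 0,0,0,1,0,0; 0,0,0,0,1,0; 0,0,0,-1,1,0]

@[simp] lemma my_cons_val_five {α : Type*} (x : α) (u : Fin 5 → α) :
    Matrix.vecCons x u 5 = u 4 := rfl

theorem fixed_points_d4 :
    (∀ x : Fin 6 → ℝ,
      (∀ A ∈ ({B123, B124, B132, B134, B142, B143, B231, B234, B241, B243, B341, B342} :
          Set (Matrix (Fin 6) (Fin 6) ℝ)), A.mulVec x = x)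
        ↔ (x 1 = x 0 + x 3 ∧ x 2 = x 1 + x 5 ∧ x 4 = x 3 + x 5))
    ∧ ∀ x : Fin 6 → ℝ,
        (x 1 = x 0 + x 3 ∧ x 2 = x 1 + x 5 ∧ x 4 = x 3 + x 5) → x 2 = x 0 + x 4 := by

  constructor
  · intro x
    constructor
    · intro h
      have h132 := congrFun (h B132 (by simp)) 1
      have h143 := congrFun (h B143 (by simp)) 2
      have h243 := congrFun (h B243 (by simp)) 4
      simp [B132, B143, B243, Matrix.mulVec, dotProduct, Fin.sum_univ_six, my_cons_val_five] at h132 h143 h243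
      refine ⟨h132.symm, h143.symm, h243.symm⟩
    · rintro ⟨h1, h2, h3⟩ A hA
      simp only [Set.mem_insert_iff, Set.mem_singleton_iff] at hA
      rcases hA with rfl|rfl|rfl|rfl|rfl|rfl|rfl|rfl|rfl|rfl|rfl|rfl <;>
        funext i <;> fin_cases i <;>
        simp [B123, B124, B132, B134, B142, B143, B231, B234, B241, B243, B341, B342,
          Matrix.mulVec, dotProduct, Fin.sum_univ_six, my_cons_val_five] <;>
        linarith
  · rintro x ⟨h1, h2, h3⟩
    linarith
end
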